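/- Let A ∈ ℝ^{n×m} and B ∈ ℝ^{n×p}, let p ∈ [0,1]^n be a probability distribution, and suppose there exists β > 0 such that p_k ≥ β ‖A(k,:)‖₂² / ‖A‖_F² for all k ∈ [n]. Draw s row indices ξ⁽¹⁾, …, ξ⁽ˢ⁾ i.i.d. from p and form the approximate product (S A)ᵀ S B = (1/s) Σ_{t=1}^s A(ξ⁽ᵗ⁾,:)ᵀ B(ξ⁽ᵗ⁾,:)/p_{ξ⁽ᵗ⁾}, where S is the corresponding row sampling and rescaling matrix. Then E[‖AᵀB − (S A)ᵀ S B‖_F²] ≤ (1/(β s)) ‖A‖_F² ‖B‖_F². -/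

import Mathlib

open Matrix MeasureTheory

/-- Squared Frobenius norm of a real matrix. -/
noncomputable def frobSq {m n : Type*} [Fintype m] [Fintype n] (M : Matrix m n ℝ) : ℝ :=
  ∑ i, ∑ j, (M i j) ^ 2

/-- Square of the smallest singular value of a matrix, as the infimum of
squared norms `‖M x‖₂²` over unit vectors `x`. -/
noncomputable def sigmaMinSq {m n : Type*} [Fintype m] [Fintype n] (M : Matrix m n ℝ) : ℝ :=
  sInf {c : ℝ | ∃ x : n → ℝ, ∑ i, (x i) ^ 2 = 1 ∧ c = ∑ j, (M.mulVec x j) ^ 2}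

/-- Square of the largest singular value of a matrix. -/
noncomputable def sigmaMaxSq {m n : Type*} [Fintype m] [Fintype n] (M : Matrix m n ℝ) : ℝ :=
  sSup {c : ℝ | ∃ x : n → ℝ, ∑ i, (x i) ^ 2 = 1 ∧ c = ∑ j, (M.mulVec x j) ^ 2}

/-- The weighted row-sampling ("RandSample") matrix determined by the sampled
indices `ξ : Fin s → Fin N` and the sampling probabilities `p`:
`S j i = 1/√(s pᵢ)` if `ξ j = i` and `0` otherwise. -/
noncomputable def randSampleMatrix {N : ℕ} (s : ℕ) (p : Fin N → ℝ) (ξ : Fin s → Fin N) :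
    Matrix (Fin s) (Fin N) ℝ :=
  fun j i => if ξ j = i then 1 / Real.sqrt (s * p i) else 0

/-- The measure on `Fin N` in which index `i` has probability `p i`. -/
noncomputable def sampleMeasure {N : ℕ} (p : Fin N → ℝ) : Measure (Fin N) :=
  ∑ i, ENNReal.ofReal (p i) • Measure.dirac i

/-- The law of `s` i.i.d. indices, each drawn from the distribution `p` on `Fin N`. -/
noncomputable def sampleMeasurePi {N : ℕ} (s : ℕ) (p : Fin N → ℝ) :
    Measure (Fin s → Fin N) :=
  Measure.pi fun _ => sampleMeasure p

open ProbabilityTheory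

/-! Entry `(i, j)` of `(SA)ᵀ SB` is the mean of `s` i.i.d. copies of the importance-weighted
estimator `A(k,i) B(k,j) / p_k`, which is unbiased for `(AᵀB)(i,j)` because the bound on `p`
forces `A(k,:) = 0` whenever `p_k = 0`. The expected squared error of that entry is therefore the
variance of the estimator divided by `s`, hence at most its second moment
`∑ₖ A(k,i)² B(k,j)² / p_k` divided by `s`. Summing over `i, j` gives
`(1/s) ∑ₖ ‖A(k,:)‖² ‖B(k,:)‖² / p_k`, and `‖A(k,:)‖² / p_k ≤ ‖A‖_F² / β`. -/

section IndependentCopies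

variable {Ω ι : Type*} [MeasurableSpace Ω] [Fintype ι] {μ : Measure Ω} [IsProbabilityMeasure μ]
  {Y : Ω → ℝ}

theorem integral_sum_comp_eval_pi (hY : Integrable Y μ) :
    ∫ ω, ∑ t, Y (ω t) ∂(Measure.pi fun _ : ι => μ) = Fintype.card ι * μ[Y] := by
  rw [integral_finsetSum _ fun t _ => integrable_comp_eval hY]
  simp [integral_comp_eval (μ := fun _ : ι => μ) hY.aestronglyMeasurable]

theorem variance_sum_comp_eval_pi (hY : MemLp Y 2 μ) :
    Var[fun ω => ∑ t, Y (ω t); Measure.pi fun _ : ι => μ] = Fintype.card ι * Var[Y; μ] := by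
  have hmem (t : ι) : MemLp (fun ω : ι → Ω => Y (ω t)) 2 (Measure.pi fun _ => μ) :=
    hY.comp_measurePreserving (measurePreserving_eval _ t)
  have hindep : iIndepFun (fun t (ω : ι → Ω) => Y (ω t)) (Measure.pi fun _ => μ) :=
    iIndepFun_pi fun _ => hY.aestronglyMeasurable.aemeasurable
  have hsum := IndepFun.variance_sum (s := Finset.univ) (fun t _ => hmem t)
    fun _ _ _ _ hst => hindep.indepFun hst
  simp only [Finset.sum_fn] at hsum
  simp [hsum, fun t => (measurePreserving_eval (fun _ : ι => μ) t).variance_fun_comp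
    hY.aestronglyMeasurable.aemeasurable]

theorem integral_sq_sub_sampleMean [Nonempty ι] (hY : MemLp Y 2 μ) :
    ∫ ω, (μ[Y] - (∑ t, Y (ω t)) / Fintype.card ι) ^ 2 ∂(Measure.pi fun _ : ι => μ)
      = Var[Y; μ] / Fintype.card ι := by
  have hc : (Fintype.card ι : ℝ) ≠ 0 := by positivity
  have hmean := integral_sum_comp_eval_pi (ι := ι) (hY.integrable one_le_two)
  have hm : AEMeasurable (fun ω => ∑ t, Y (ω t)) (Measure.pi fun _ : ι => μ) :=
    Finset.aemeasurable_fun_sum _ fun t _ =>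
      hY.aestronglyMeasurable.aemeasurable.comp_quasiMeasurePreserving
        (Measure.quasiMeasurePreserving_eval _ t)
  calc ∫ ω, (μ[Y] - (∑ t, Y (ω t)) / Fintype.card ι) ^ 2 ∂(Measure.pi fun _ : ι => μ)
      = Var[fun ω => ∑ t, Y (ω t); Measure.pi fun _ : ι => μ] / Fintype.card ι ^ 2 := by
        rw [variance_eq_integral hm, ← integral_div, hmean]
        congr 1 with ω
        field_simp
        ring
    _ = Var[Y; μ] / Fintype.card ι := by
        rw [variance_sum_comp_eval_pi hY]
        field_simp

end IndependentCopies

section SampleMeasure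

variable {N : ℕ} {p : Fin N → ℝ}

theorem integral_sampleMeasure (hp0 : ∀ k, 0 ≤ p k) (f : Fin N → ℝ) :
    ∫ k, f k ∂(sampleMeasure p) = ∑ k, p k * f k := by
  rw [sampleMeasure, integral_finsetSum_measure fun _ _ =>
    Integrable.of_finite.smul_measure ENNReal.ofReal_ne_top]
  simp [integral_smul_measure, hp0]

theorem isProbabilityMeasure_sampleMeasure (hp0 : ∀ k, 0 ≤ p k) (hp1 : ∑ k, p k = 1) :
    IsProbabilityMeasure (sampleMeasure p) := by
  constructor
  simp [sampleMeasure, hp0, ← ENNReal.ofReal_sum_of_nonneg, hp1]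

theorem randSampleMatrix_mul_apply {s : ℕ} {c : Type*} [Fintype c] (ξ : Fin s → Fin N)
    (M : Matrix (Fin N) c ℝ) (t : Fin s) (i : c) :
    (randSampleMatrix s p ξ * M) t i = M (ξ t) i / Real.sqrt (s * p (ξ t)) := by
  simp [Matrix.mul_apply, randSampleMatrix, ite_mul, div_eq_inv_mul]

theorem randSampleMatrix_mul_transpose_mul_apply {m q s : ℕ} (hp0 : ∀ k, 0 ≤ p k)
    (ξ : Fin s → Fin N) (A : Matrix (Fin N) (Fin m) ℝ) (B : Matrix (Fin N) (Fin q) ℝ)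
    (i : Fin m) (j : Fin q) :
    ((randSampleMatrix s p ξ * A)ᵀ * (randSampleMatrix s p ξ * B)) i j
      = (∑ t, A (ξ t) i * B (ξ t) j / p (ξ t)) / s := by
  simp only [Matrix.mul_apply (M := (randSampleMatrix s p ξ * A)ᵀ), Matrix.transpose_apply,
    randSampleMatrix_mul_apply, Finset.sum_div]
  refine Finset.sum_congr rfl fun t _ => ?_
  rw [div_mul_div_comm, Real.mul_self_sqrt (by positivity [hp0 (ξ t)]), div_div, mul_comm (p _)]

end SampleMeasure

theorem frobSq_nonneg {m n : Type*} [Fintype m] [Fintype n] (M : Matrix m n ℝ) :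
    0 ≤ frobSq M :=
  Finset.sum_nonneg fun i _ => Finset.sum_nonneg fun j _ => sq_nonneg (M i j)

section ImportanceSampling

variable {n m q : ℕ} {A : Matrix (Fin n) (Fin m) ℝ} {p : Fin n → ℝ} {β : ℝ}

theorem row_sq_sum_le_of_sampling_bound
    (hpk : ∀ k, β * (∑ i, (A k i) ^ 2) / frobSq A ≤ p k) (k : Fin n) :
    β * ∑ i, A k i ^ 2 ≤ p k * frobSq A := by
  have hrow : ∑ i, A k i ^ 2 ≤ frobSq A :=
    Finset.single_le_sum (f := fun k => ∑ i, A k i ^ 2)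
      (fun k _ => Finset.sum_nonneg fun i _ => sq_nonneg (A k i)) (Finset.mem_univ k)
  rcases (frobSq_nonneg A).eq_or_lt with hA | hA
  -- `hpk` says nothing when `frobSq A = 0` (division by zero), but then the row vanishes.
  · have : ∑ i, A k i ^ 2 = 0 := le_antisymm (hA ▸ hrow) (Finset.sum_nonneg fun i _ => sq_nonneg _)
    simp [this, ← hA]
  · exact (div_le_iff₀ hA).1 (hpk k)

theorem eq_zero_of_sampling_prob_eq_zero (hβ : 0 < β)
    (hrow : ∀ k, β * ∑ i, A k i ^ 2 ≤ p k * frobSq A) {k : Fin n} (hk : p k = 0) (i : Fin m) :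
    A k i = 0 := by
  have : ∑ i, A k i ^ 2 = 0 := by
    refine le_antisymm ?_ (Finset.sum_nonneg fun i _ => sq_nonneg _)
    exact le_of_mul_le_mul_left (by simpa [hk] using hrow k) hβ
  exact pow_eq_zero_iff two_ne_zero |>.1 <|
    (Finset.sum_eq_zero_iff_of_nonneg fun i _ => sq_nonneg (A k i)).1 this i (Finset.mem_univ i)

variable (B : Matrix (Fin n) (Fin q) ℝ)

theorem integral_sampleMeasure_mul_div (hp0 : ∀ k, 0 ≤ p k)
    (hA0 : ∀ k, p k = 0 → ∀ i, A k i = 0) (i : Fin m) (j : Fin q) :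
    ∫ k, A k i * B k j / p k ∂(sampleMeasure p) = (Aᵀ * B) i j := by
  rw [integral_sampleMeasure hp0, Matrix.mul_apply]
  refine Finset.sum_congr rfl fun k _ => ?_
  rcases eq_or_ne (p k) 0 with hk | hk
  · simp [hk, hA0 k hk i]
  · simp [mul_div_cancel₀ _ hk]

theorem integral_frobSq_sampling_error_eq {s : ℕ} (hs : 0 < s) (hp0 : ∀ k, 0 ≤ p k)
    (hp1 : ∑ k, p k = 1) (hA0 : ∀ k, p k = 0 → ∀ i, A k i = 0) :
    ∫ ξ, frobSq (Aᵀ * B - (randSampleMatrix s p ξ * A)ᵀ * (randSampleMatrix s p ξ * B))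
        ∂(sampleMeasurePi s p)
      = ∑ i, ∑ j, Var[fun k => A k i * B k j / p k; sampleMeasure p] / s := by
  have := isProbabilityMeasure_sampleMeasure hp0 hp1
  have : Nonempty (Fin s) := ⟨⟨0, hs⟩⟩
  simp only [sampleMeasurePi, frobSq, Matrix.sub_apply,
    randSampleMatrix_mul_transpose_mul_apply hp0, ← integral_sampleMeasure_mul_div B hp0 hA0]
  rw [integral_finsetSum _ fun _ _ => Integrable.of_finite]
  refine Finset.sum_congr rfl fun i _ => ?_
  rw [integral_finsetSum _ fun _ _ => Integrable.of_finite]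
  refine Finset.sum_congr rfl fun j _ => ?_
  simpa using integral_sq_sub_sampleMean (ι := Fin s) (μ := sampleMeasure p)
    (Y := fun k => A k i * B k j / p k) MemLp.of_discrete

theorem sum_integral_sampleMeasure_sq_mul_div (hp0 : ∀ k, 0 ≤ p k) :
    ∑ i, ∑ j, ∫ k, (A k i * B k j / p k) ^ 2 ∂(sampleMeasure p)
      = ∑ k, (∑ i, A k i ^ 2) * (∑ j, B k j ^ 2) / p k := by
  simp only [integral_sampleMeasure hp0, Finset.sum_mul_sum, Finset.sum_div]
  conv_rhs => rw [Finset.sum_comm]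
  refine Finset.sum_congr rfl fun i _ => ?_
  conv_rhs => rw [Finset.sum_comm]
  refine Finset.sum_congr rfl fun j _ => Finset.sum_congr rfl fun k _ => ?_
  rcases eq_or_ne (p k) 0 with hk | hk
  · simp [hk]
  · field_simp

theorem sum_row_sq_mul_row_sq_div_le (hp0 : ∀ k, 0 ≤ p k) (hβ : 0 < β)
    (hrow : ∀ k, β * ∑ i, A k i ^ 2 ≤ p k * frobSq A) :
    ∑ k, (∑ i, A k i ^ 2) * (∑ j, B k j ^ 2) / p k ≤ frobSq A / β * frobSq B := by
  change _ ≤ _ * ∑ k, ∑ j, B k j ^ 2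
  rw [Finset.mul_sum]
  refine Finset.sum_le_sum fun k _ => ?_
  rw [mul_div_right_comm]
  refine mul_le_mul_of_nonneg_right ?_ (Finset.sum_nonneg fun j _ => sq_nonneg _)
  refine div_le_of_le_mul₀ (hp0 k) (div_nonneg (frobSq_nonneg A) hβ.le) ?_
  rw [div_mul_eq_mul_div, le_div_iff₀ hβ]
  linarith [hrow k]

end ImportanceSampling

/-- Lemma 4.3, randomized matrix-matrix multiplication, expected
squared Frobenius error bound. If `p_k ≥ β ‖A(k,:)‖₂²/‖A‖_F²` for all `k`, then
`E[‖AᵀB − (SA)ᵀ SB‖_F²] ≤ ‖A‖_F² ‖B‖_F² / (β s)`. -/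
theorem randomized_matmul_error_bound {n m q s : ℕ} (hs : 0 < s)
    (A : Matrix (Fin n) (Fin m) ℝ) (B : Matrix (Fin n) (Fin q) ℝ)
    (p : Fin n → ℝ) (hp0 : ∀ k, 0 ≤ p k) (hp1 : ∑ k, p k = 1)
    (β : ℝ) (hβ : 0 < β)
    (hpk : ∀ k, β * (∑ i, (A k i) ^ 2) / frobSq A ≤ p k) :
    ∫ ξ, frobSq (Aᵀ * B -
          (randSampleMatrix s p ξ * A)ᵀ * (randSampleMatrix s p ξ * B))
        ∂(sampleMeasurePi s p)
      ≤ 1 / (β * s) * (frobSq A * frobSq B) := by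
  have hrow := row_sq_sum_le_of_sampling_bound hpk
  have := isProbabilityMeasure_sampleMeasure hp0 hp1
  rw [integral_frobSq_sampling_error_eq B hs hp0 hp1
    fun k hk => eq_zero_of_sampling_prob_eq_zero hβ hrow hk]
  calc ∑ i, ∑ j, Var[fun k => A k i * B k j / p k; sampleMeasure p] / s
      ≤ ∑ i, ∑ j, (∫ k, (A k i * B k j / p k) ^ 2 ∂(sampleMeasure p)) / s := by
        gcongr
        exact variance_le_expectation_sq AEStronglyMeasurable.of_discrete
    _ = (∑ k, (∑ i, A k i ^ 2) * (∑ j, B k j ^ 2) / p k) / s := by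
        simp only [← Finset.sum_div, sum_integral_sampleMeasure_sq_mul_div B hp0]
    _ ≤ frobSq A / β * frobSq B / s := by
        gcongr
        exact sum_row_sq_mul_row_sq_div_le B hp0 hβ hrow
    _ = 1 / (β * s) * (frobSq A * frobSq B) := by ring
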